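/- arXiv:2509.09182 — 6 statements merged into one kernel-verified Lean document; each statement's English description precedes it below -/
import Mathlib

section
/- For λ > 0 and η > 0, the quantile-based fractional generalized cumulative past entropy of the exponential distribution with rate λ, whose quantile density function is q(p) = 1/(λ(1−p)), equals (ζ(η+1) − 1)/λ; that is, (1/Γ(η+1)) ∫₀¹ p (−ln p)^η / (λ(1−p)) dp = (ζ(η+1) − 1)/λ, where ζ(s) = Σ_{k≥1} k^{−s}. -/
open MeasureTheory Real

/-- The Riemann zeta function on the reals, `ζ(s) = Σ_{k ≥ 1} k ^ (-s)`. -/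
noncomputable def zetaReal (s : ℝ) : ℝ := ∑' n : ℕ, 1 / ((n : ℝ) + 1) ^ s

section Aux
open Set

lemma exp_neg_image : (fun t : ℝ => Real.exp (-t)) '' Set.Ioi 0 = Set.Ioo 0 1 := by
  ext x
  constructor
  · rintro ⟨t, ht, rfl⟩
    exact ⟨Real.exp_pos _, by rw [Real.exp_lt_one_iff]; simpa using ht⟩
  · rintro ⟨hx0, hx1⟩
    exact ⟨-Real.log x, by simpa using Real.log_neg hx0 hx1, by simp [Real.exp_log hx0]⟩

lemma key_deriv (t : ℝ) : HasDerivAt (fun t : ℝ => Real.exp (-t)) (-Real.exp (-t)) t := by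
  have h := ((Real.hasDerivAt_exp (-t)).comp t (hasDerivAt_neg t))
  simp only [mul_neg, mul_one] at h
  exact h

lemma key_inj : Set.InjOn (fun t : ℝ => Real.exp (-t)) (Set.Ioi 0) :=
  fun a _ b _ h => by simpa using Real.exp_injective h

lemma fun_eq (η : ℝ) (k : ℕ) {t : ℝ} (ht : t ∈ Set.Ioi (0:ℝ)) :
    |(-Real.exp (-t))| • (Real.exp (-t) ^ ((k:ℝ)+1) * (-Real.log (Real.exp (-t))) ^ η)
      = t ^ ((η+1)-1) * Real.exp (-(((k:ℝ)+2) * t)) := by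
  rw [abs_neg, abs_of_pos (Real.exp_pos _), Real.log_exp, neg_neg, smul_eq_mul,
    Real.rpow_def_of_pos (Real.exp_pos _), Real.log_exp]
  have h2 : Real.exp (-t) * Real.exp (-t*((k:ℝ)+1)) = Real.exp (-(((k:ℝ)+2)*t)) := by
    rw [← Real.exp_add]; congr 1; ring
  rw [show (η+1)-1 = η by ring, ← mul_assoc, h2, mul_comm]

lemma key_integral (η : ℝ) (hη : 0 < η) (k : ℕ) :
    ∫ x in Set.Ioo (0:ℝ) 1, x ^ ((k:ℝ)+1) * (-Real.log x) ^ η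
      = (1/((k:ℝ)+2)) ^ (η+1) * Real.Gamma (η+1) := by
  have hk2 : (0:ℝ) < (k:ℝ)+2 := by positivity
  rw [← exp_neg_image,
    integral_image_eq_integral_abs_deriv_smul measurableSet_Ioi
      (fun t _ => (key_deriv t).hasDerivWithinAt) key_inj,
    setIntegral_congr_fun measurableSet_Ioi (fun t ht => fun_eq η k ht),
    integral_rpow_mul_exp_neg_mul_Ioi (by linarith : (0:ℝ) < η+1) hk2]

lemma key_integrable (η : ℝ) (hη : 0 < η) (k : ℕ) :
    IntegrableOn (fun x : ℝ => x ^ ((k:ℝ)+1) * (-Real.log x) ^ η) (Set.Ioo 0 1) := by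
  have hk2 : (0:ℝ) < (k:ℝ)+2 := by positivity
  rw [← exp_neg_image,
    integrableOn_image_iff_integrableOn_abs_deriv_smul measurableSet_Ioi
      (fun t _ => (key_deriv t).hasDerivWithinAt) key_inj]
  have : IntegrableOn (fun t : ℝ => t ^ ((η+1)-1) * Real.exp (-(((k:ℝ)+2) * t))) (Set.Ioi 0) := by
    have h := integrableOn_rpow_mul_exp_neg_mul_rpow
      (show (-1:ℝ) < (η+1)-1 by linarith) (zero_lt_one : (0:ℝ) < 1) hk2
    refine h.congr_fun (fun t ht => ?_) measurableSet_Ioi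
    beta_reduce
    rw [Real.rpow_one, neg_mul]
  exact this.congr_fun (fun t ht => (fun_eq η k ht).symm) measurableSet_Ioi

lemma summable_base {s : ℝ} (hs : 1 < s) : Summable (fun n : ℕ => 1/((n:ℝ)+1)^s) := by
  have h := Real.summable_one_div_nat_rpow.2 hs
  have h2 := (summable_nat_add_iff 1).2 h
  simpa using h2

lemma summable_shift {s : ℝ} (hs : 1 < s) : Summable (fun k : ℕ => 1/((k:ℝ)+2)^s) := by
  have h2 := (summable_nat_add_iff 1).2 (summable_base hs)
  refine h2.congr fun k => ?_
  push_cast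
  ring_nf

lemma zeta_sub_one {s : ℝ} (hs : 1 < s) :
    ∑' k : ℕ, 1/((k:ℝ)+2)^s = zetaReal s - 1 := by
  have h := summable_base hs
  have h0 := Summable.tsum_eq_zero_add h
  have : zetaReal s = 1 + ∑' k : ℕ, 1/((k:ℝ)+2)^s := by
    rw [zetaReal, h0]
    norm_num
    refine tsum_congr fun k => ?_
    push_cast
    ring_nf
  linarith

lemma tsum_pt (η : ℝ) {x : ℝ} (hx : x ∈ Set.Ioo (0:ℝ) 1) :
    ∑' k : ℕ, x ^ ((k:ℝ)+1) * (-Real.log x) ^ η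
      = x * (1-x)⁻¹ * (-Real.log x) ^ η := by
  obtain ⟨hx0, hx1⟩ := hx
  have hpow : ∀ k : ℕ, x ^ ((k:ℝ)+1) * (-Real.log x) ^ η
      = x^(k:ℕ) * (x * (-Real.log x) ^ η) := by
    intro k
    rw [show ((k:ℝ)+1) = ((k+1:ℕ):ℝ) by push_cast; ring, Real.rpow_natCast, pow_succ]
    ring
  rw [tsum_congr hpow, tsum_mul_right, tsum_geometric_of_lt_one hx0.le hx1]
  ring

/-- The QFGCPE of the exponential distribution with rate `λ`, whose quantile
density function is `q(p) = 1 / (λ (1 - p))`, equals `(ζ(η + 1) - 1) / λ`. -/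
theorem qfgcpe_exponential (lam η : ℝ) (hlam : 0 < lam) (hη : 0 < η) :
    (1 / Real.Gamma (η + 1)) * ∫ p in (0 : ℝ)..1, p * (-Real.log p) ^ η / (lam * (1 - p))
      = (zetaReal (η + 1) - 1) / lam := by
  have hs1 : 1 < η + 1 := by linarith
  have hΓ : 0 < Real.Gamma (η + 1) := Real.Gamma_pos_of_pos (by linarith)
  set f : ℕ → ℝ → ℝ := fun k x => x ^ ((k:ℝ)+1) * (-Real.log x) ^ η with hf
  have hm : ∀ k, AEStronglyMeasurable (f k) (volume.restrict (Set.Ioo 0 1)) := by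
    intro k
    have hc : ContinuousOn (f k) (Set.Ioo 0 1) := by
      apply ContinuousOn.mul
      · exact continuousOn_id.rpow_const (fun x hx => Or.inl hx.1.ne')
      · exact ((Real.continuousOn_log.mono (fun x hx => hx.1.ne')).neg).rpow_const
          (fun x hx => Or.inr hη.le)
    exact hc.aestronglyMeasurable measurableSet_Ioo
  have hnonneg : ∀ k, ∀ x ∈ Set.Ioo (0:ℝ) 1, 0 ≤ f k x := by
    intro k x hx
    exact mul_nonneg (Real.rpow_nonneg hx.1.le _)
      (Real.rpow_nonneg (by simpa using (Real.log_neg hx.1 hx.2).le) _)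
  have hlint : ∀ k, ∫⁻ a in Set.Ioo (0:ℝ) 1, ‖f k a‖₊
      = ENNReal.ofReal ((1/((k:ℝ)+2)) ^ (η+1) * Real.Gamma (η+1)) := by
    intro k
    simp only [← enorm_eq_nnnorm]
    rw [← ofReal_integral_norm_eq_lintegral_enorm (key_integrable η hη k)]
    congr 1
    rw [setIntegral_congr_fun measurableSet_Ioo
      (fun x hx => by rw [Real.norm_eq_abs, abs_of_nonneg (hnonneg k x hx)])]
    exact key_integral η hη k
  have hval : ∀ k : ℕ, (1/((k:ℝ)+2)) ^ (η+1) = 1/((k:ℝ)+2)^(η+1) := by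
    intro k
    rw [one_div, one_div, Real.inv_rpow (by positivity)]
  have hsum : Summable (fun k : ℕ => (1/((k:ℝ)+2)) ^ (η+1) * Real.Gamma (η+1)) := by
    refine ((summable_shift hs1).mul_right (Real.Gamma (η+1))).congr fun k => ?_
    rw [hval]
  have hne : (∑' k : ℕ, ∫⁻ a in Set.Ioo (0:ℝ) 1, ‖f k a‖₊) ≠ ⊤ := by
    rw [tsum_congr hlint, ← ENNReal.ofReal_tsum_of_nonneg
      (fun k => mul_nonneg (Real.rpow_nonneg (by positivity) _) hΓ.le) hsum]
    exact ENNReal.ofReal_ne_top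
  rw [intervalIntegral.integral_of_le zero_le_one, integral_Ioc_eq_integral_Ioo,
    setIntegral_congr_fun measurableSet_Ioo
      (fun p hp => show p * (-Real.log p) ^ η / (lam * (1 - p)) = lam⁻¹ * ∑' k, f k p by
        rw [tsum_pt η hp]
        have h1 : (1:ℝ) - p ≠ 0 := by have := hp.2; intro h; linarith [hp.2, sub_eq_zero.mp h]
        field_simp),
    integral_const_mul, integral_tsum hm hne]
  have htv : ∀ k : ℕ, ∫ a in Set.Ioo (0:ℝ) 1, f k a
      = 1/((k:ℝ)+2)^(η+1) * Real.Gamma (η+1) := by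
    intro k
    rw [key_integral η hη k, hval]
  rw [tsum_congr htv, tsum_mul_right, zeta_sub_one hs1]
  field_simp

end Aux
end

section
/- For a, b > 0 and η > 1/a, the quantile-based fractional generalized cumulative past entropy of the Fréchet distribution, whose quantile density function is q(p) = (b^{1/a}/(a p)) (−ln p)^{−(1 + 1/a)}, equals (b^{1/a}/(a Γ(η+1))) Γ(η − 1/a); that is, (1/Γ(η+1)) ∫₀¹ p (−ln p)^η · (b^{1/a}/(a p)) (−ln p)^{−(1+1/a)} dp = b^{1/a} Γ(η − 1/a) / (a Γ(η+1)). -/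
open MeasureTheory Real

lemma neg_log_rpow_integral (s : ℝ) (hs : 0 < s) :
    ∫ p in (0:ℝ)..1, (-Real.log p) ^ (s - 1) = Real.Gamma s := by
  rw [intervalIntegral.integral_of_le zero_le_one,
    ← MeasureTheory.setIntegral_congr_set (Ioo_ae_eq_Ioc (a := (0:ℝ)) (b := 1))]
  have himg : Set.Ioo (0:ℝ) 1 = (fun x => Real.exp (-x)) '' Set.Ioi 0 := by
    ext y
    constructor
    · rintro ⟨hy0, hy1⟩
      refine ⟨-Real.log y, ?_, by simp [Real.exp_log hy0]⟩
      simpa using Real.log_neg hy0 hy1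
    · rintro ⟨x, hx, rfl⟩
      exact ⟨Real.exp_pos _, Real.exp_lt_one_iff.mpr (by simpa using hx)⟩
  have hderiv : ∀ x ∈ Set.Ioi (0:ℝ),
      HasDerivWithinAt (fun x => Real.exp (-x)) (-Real.exp (-x)) (Set.Ioi 0) x := by
    intro x _
    have h : HasDerivAt (fun x => Real.exp (-x)) (-Real.exp (-x)) x := by
      simpa [Function.comp_def] using (Real.hasDerivAt_exp (-x)).comp x (hasDerivAt_neg x)
    exact h.hasDerivWithinAt
  have hinj : Set.InjOn (fun x => Real.exp (-x)) (Set.Ioi 0) := fun x _ y _ h => by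
    have := Real.exp_injective h
    linarith [neg_injective this]
  rw [himg, integral_image_eq_integral_abs_deriv_smul measurableSet_Ioi hderiv hinj]
  simp only [abs_neg, Real.abs_exp, Real.log_exp, neg_neg, smul_eq_mul]
  exact (Real.Gamma_eq_integral hs).symm

/-- The QFGCPE of the Fréchet distribution, whose quantile density function
is `q(p) = (b^(1/a) / (a p)) (-ln p)^(-(1 + 1/a))`, equals
`(b^(1/a) / (a Γ(η+1))) Γ(η - 1/a)` for `η > 1/a`. -/
theorem qfgcpe_frechet (a b η : ℝ) (ha : 0 < a) (hb : 0 < b) (hη : 1 / a < η) :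
    (1 / Real.Gamma (η + 1)) *
        ∫ p in (0 : ℝ)..1,
          p * (-Real.log p) ^ η * (b ^ (1 / a) / (a * p) * (-Real.log p) ^ (-(1 + 1 / a)))
      = b ^ (1 / a) * Real.Gamma (η - 1 / a) / (a * Real.Gamma (η + 1)) := by
  have hs : 0 < η - 1 / a := sub_pos.mpr hη
  have hcongr : ∫ p in (0 : ℝ)..1,
      p * (-Real.log p) ^ η * (b ^ (1 / a) / (a * p) * (-Real.log p) ^ (-(1 + 1 / a)))
      = ∫ p in (0 : ℝ)..1, b ^ (1 / a) / a * (-Real.log p) ^ (η - 1 / a - 1) := by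
    apply intervalIntegral.integral_congr_ae
    have hne : ∀ᵐ x : ℝ, x ≠ 1 := by
      refine (MeasureTheory.ae_iff).mpr ?_
      simpa using Real.volume_singleton (a := 1)
    filter_upwards [hne] with p hp1 hp
    rw [Set.uIoc_of_le zero_le_one] at hp
    have hp0 : 0 < p := hp.1
    have hplt : p < 1 := lt_of_le_of_ne hp.2 hp1
    have hX : 0 < -Real.log p := by simpa using Real.log_neg hp0 hplt
    rw [show η - 1 / a - 1 = η + -(1 + 1 / a) by ring, Real.rpow_add hX]
    field_simp
  rw [hcongr, intervalIntegral.integral_const_mul, neg_log_rpow_integral _ hs]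
  ring
end

section
/- Let K > 0, b > −2, and η > 0, and consider a random variable with quantile density function q(v) = K v^b (1−v)^{−(a+b)} with a + b = 0, i.e., q(v) = K v^b. Then its quantile-based fractional generalized cumulative past entropy equals K/(b+2)^{η+1}; that is, (1/Γ(η+1)) ∫₀¹ p (−ln p)^η K p^b dp = K/(b+2)^{η+1}. -/
open MeasureTheory Real

/-- For a random variable with quantile density `q(v) = K v^b (1-v)^{-(a+b)}`
in the case `a + b = 0`, i.e. `q(v) = K v^b`, the QFGCPE equals `K / (b+2)^(η+1)`. -/
theorem qfgcpe_case_sum_zero (K b η : ℝ) (hK : 0 < K) (hb : -2 < b) (hη : 0 < η) :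
    (1 / Real.Gamma (η + 1)) * ∫ p in (0 : ℝ)..1, p * (-Real.log p) ^ η * (K * p ^ b)
      = K / (b + 2) ^ (η + 1) := by
  open Set in
  have hb2 : (0:ℝ) < b + 2 := by linarith
  have himg : (fun t : ℝ => Real.exp (-t)) '' Ioi 0 = Ioo 0 1 := by
    ext x
    constructor
    · rintro ⟨t, ht, rfl⟩
      exact ⟨Real.exp_pos _, Real.exp_lt_one_iff.mpr (by simpa using ht)⟩
    · rintro ⟨hx0, hx1⟩
      exact ⟨-Real.log x, by simpa using Real.log_neg hx0 hx1,
        by simp [Real.exp_log hx0]⟩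
  have hderiv : ∀ t ∈ Ioi (0:ℝ), HasDerivWithinAt (fun t : ℝ => Real.exp (-t))
      (-Real.exp (-t)) (Ioi 0) t := by
    intro t _
    rw [show -rexp (-t) = rexp (-t) * -1 by ring]
    exact ((Real.hasDerivAt_exp (-t)).comp t ((hasDerivAt_id t).neg)).hasDerivWithinAt
  have hinj : InjOn (fun t : ℝ => Real.exp (-t)) (Ioi 0) :=
    (Real.exp_injective.injOn.comp neg_injective.injOn ((Ioi 0).mapsTo_univ _))
  have key : (∫ p in Ioo (0:ℝ) 1, p * (-Real.log p) ^ η * (K * p ^ b))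
      = ∫ t in Ioi (0:ℝ), K * (t ^ (η + 1 - 1) * Real.exp (-((b+2) * t))) := by
    rw [← himg, integral_image_eq_integral_abs_deriv_smul measurableSet_Ioi hderiv hinj]
    refine setIntegral_congr_fun measurableSet_Ioi (fun t ht => ?_)
    have ht' : (0:ℝ) < t := ht
    have he : (0:ℝ) < Real.exp (-t) := Real.exp_pos _
    rw [smul_eq_mul]
    rw [abs_neg, abs_of_pos he, Real.log_exp, neg_neg, Real.rpow_def_of_pos he, Real.log_exp]
    have e3 : rexp (-t) * (rexp (-t) * t ^ η * (K * rexp (-t * b)))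
        = K * (t ^ η * rexp (-t + (-t + -t * b))) := by
      rw [Real.exp_add, Real.exp_add]; ring
    rw [e3, add_sub_cancel_right]
    congr 2
    ring
  have hGam := Real.integral_rpow_mul_exp_neg_mul_Ioi (by linarith : (0:ℝ) < η + 1) hb2
  rw [intervalIntegral.integral_of_le (by norm_num : (0:ℝ) ≤ 1),
    MeasureTheory.integral_Ioc_eq_integral_Ioo, key, integral_const_mul, hGam]
  have hG : Real.Gamma (η + 1) ≠ 0 := (Real.Gamma_pos_of_pos (by linarith)).ne'
  rw [one_div, div_rpow (by norm_num) hb2.le, one_rpow]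
  field_simp
end

section
/- The fractional generalized cumulative past entropy is scale-dependent and shift-independent: let G : ℝ → [0,1] be the distribution function of a nonnegative random variable X (so G(x) = 0 for x ≤ 0, G nondecreasing), let a > 0, b ≥ 0, and set G_Y(x) = G((x − b)/a), the distribution function of Y = aX + b. Then, with the convention 0·(−ln 0)^η = 0, for every η > 0: ∫₀^∞ G_Y(x) (−ln G_Y(x))^η dx = a ∫₀^∞ G(x) (−ln G(x))^η dx; in particular 𝒞Pξ^η(aX + b) = a 𝒞Pξ^η(X). -/
open MeasureTheory Real

/-- The FGCPE is scale-dependent and shift-independent. If `G` is the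
distribution function of a nonnegative random variable (`G x = 0` for `x ≤ 0`, `G`
nondecreasing with values in `[0,1]`), `a > 0`, `b ≥ 0`, and `G_Y x = G ((x - b) / a)`
is the distribution function of `Y = aX + b`, then
`∫₀^∞ G_Y x (-ln G_Y x)^η dx = a ∫₀^∞ G x (-ln G x)^η dx`, and in particular
`𝒞Pξ^η(aX + b) = a 𝒞Pξ^η(X)`. (With the `rpow` convention, the integrand vanishes
wherever the distribution function vanishes.) -/
theorem fgcpe_affine (G : ℝ → ℝ) (a b η : ℝ)
    (hGnn : ∀ x, 0 ≤ G x) (hG1 : ∀ x, G x ≤ 1)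
    (hG0 : ∀ x ≤ 0, G x = 0) (hGmono : Monotone G)
    (ha : 0 < a) (hb : 0 ≤ b) (hη : 0 < η) :
    (∫ x in Set.Ioi (0 : ℝ), G ((x - b) / a) * (-Real.log (G ((x - b) / a))) ^ η)
        = a * ∫ x in Set.Ioi (0 : ℝ), G x * (-Real.log (G x)) ^ η ∧
    (1 / Real.Gamma (η + 1)) *
        (∫ x in Set.Ioi (0 : ℝ), G ((x - b) / a) * (-Real.log (G ((x - b) / a))) ^ η)
      = a * ((1 / Real.Gamma (η + 1)) * ∫ x in Set.Ioi (0 : ℝ), G x * (-Real.log (G x)) ^ η) := by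
  set f : ℝ → ℝ := fun x => G x * (-Real.log (G x)) ^ η with hf
  have hf0 : ∀ x ≤ 0, f x = 0 := fun x hx => by simp [hf, hG0 x hx]
  have key : (∫ x in Set.Ioi (0 : ℝ), f ((x - b) / a)) = a * ∫ x in Set.Ioi (0 : ℝ), f x := by
    have h1 : (∫ x in Set.Ioi (0 : ℝ), f ((x - b) / a)) = ∫ x : ℝ, f ((x - b) / a) := by
      apply setIntegral_eq_integral_of_forall_compl_eq_zero
      intro x hx
      simp only [Set.mem_Ioi, not_lt] at hx
      exact hf0 _ (div_nonpos_of_nonpos_of_nonneg (by linarith) ha.le)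
    have h2 : (∫ x : ℝ, f ((x - b) / a)) = ∫ x : ℝ, f (x / a) :=
      integral_sub_right_eq_self (fun y => f (y / a)) b
    have h3 : (∫ x : ℝ, f (x / a)) = |a| • ∫ x : ℝ, f x :=
      MeasureTheory.Measure.integral_comp_div f a
    have h4 : (∫ x : ℝ, f x) = ∫ x in Set.Ioi (0 : ℝ), f x := by
      symm
      apply setIntegral_eq_integral_of_forall_compl_eq_zero
      intro x hx
      simp only [Set.mem_Ioi, not_lt] at hx
      exact hf0 _ hx
    rw [h1, h2, h3, h4, abs_of_pos ha, smul_eq_mul]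
  refine ⟨key, ?_⟩
  rw [key]; ring
end

section
/- Let X, Y have differentiable quantile functions Q_X, Q_Y : (0,1) → ℝ with derivatives q_X, q_Y ≥ 0, and let η > 0. (i) If X ≤_{RHQ} Y (i.e. 1/(v q_X(v)) ≤ 1/(v q_Y(v)), equivalently q_X ≥ q_Y), Ψ : ℝ → ℝ is increasing, differentiable and concave, and X ≤_{disp} Y (i.e. Q_X(v) ≤ Q_Y(v) for all v ∈ (0,1)), then ∫₀¹ p (−ln p)^η q_X(p) Ψ′(Q_X(p)) dp ≥ ∫₀¹ p (−ln p)^η q_Y(p) Ψ′(Q_Y(p)) dp, i.e. Ψ(X) ≥_{QFGCPE} Ψ(Y). (ii) If instead X ≤_{HQ} Y (i.e. 1/((1−v) q_X(v)) ≥ 1/((1−v) q_Y(v)), equivalently q_X ≤ q_Y), Ψ is increasing, differentiable and convex, and X ≤_{disp} Y, then ∫₀¹ p (−ln p)^η q_X(p) Ψ′(Q_X(p)) dp ≤ ∫₀¹ p (−ln p)^η q_Y(p) Ψ′(Q_Y(p)) dp, i.e. Ψ(X) ≤_{QFGCPE} Ψ(Y). -/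
open MeasureTheory Real

private lemma deriv_nonneg_of_strictMono {Ψ Ψ' : ℝ → ℝ} (hΨ : StrictMono Ψ)
    (hd : ∀ x, HasDerivAt Ψ (Ψ' x) x) (x : ℝ) : 0 ≤ Ψ' x := by
  have h := hasDerivAt_iff_tendsto_slope.mp (hd x)
  have h2 : Filter.Tendsto (slope Ψ x) (nhdsWithin x (Set.Ioi x)) (nhds (Ψ' x)) :=
    h.mono_left (nhdsWithin_mono x (fun y hy => ne_of_gt hy))
  refine ge_of_tendsto h2 ?_
  filter_upwards [self_mem_nhdsWithin] with y hy
  have hxy : x < y := hy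
  rw [slope_def_field]
  exact div_nonneg (by linarith [hΨ hxy]) (by linarith)

private lemma convex_deriv_mono {Ψ Ψ' : ℝ → ℝ} (hc : ConvexOn ℝ Set.univ Ψ)
    (hd : ∀ x, HasDerivAt Ψ (Ψ' x) x) {x y : ℝ} (hxy : x ≤ y) : Ψ' x ≤ Ψ' y := by
  rcases eq_or_lt_of_le hxy with rfl | h
  · exact le_rfl
  · calc Ψ' x ≤ slope Ψ x y :=
        hc.le_slope_of_hasDerivAt (Set.mem_univ x) (Set.mem_univ y) h (hd x)
      _ ≤ Ψ' y := hc.slope_le_of_hasDerivAt (Set.mem_univ x) (Set.mem_univ y) h (hd y)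

private lemma concave_deriv_anti {Ψ Ψ' : ℝ → ℝ} (hc : ConcaveOn ℝ Set.univ Ψ)
    (hd : ∀ x, HasDerivAt Ψ (Ψ' x) x) {x y : ℝ} (hxy : x ≤ y) : Ψ' y ≤ Ψ' x := by
  have := convex_deriv_mono (Ψ := fun z => -Ψ z) (Ψ' := fun z => -Ψ' z) hc.neg
    (fun z => (hd z).neg) hxy
  simpa using this

/-- Let `X, Y` have differentiable quantile functions `Q_X, Q_Y` with
nonnegative derivatives `q_X, q_Y`, and `η > 0`.
(i) If `X ≤_RHQ Y` (equivalently `q_X ≥ q_Y` on `(0,1)`), `Ψ` is increasing,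
differentiable and concave, and `X ≤_disp Y` (i.e. `Q_X ≤ Q_Y` on `(0,1)`), then
`Ψ(X) ≥_QFGCPE Ψ(Y)`.
(ii) If `X ≤_HQ Y` (equivalently `q_X ≤ q_Y` on `(0,1)`), `Ψ` is increasing,
differentiable and convex, and `X ≤_disp Y`, then `Ψ(X) ≤_QFGCPE Ψ(Y)`. -/
theorem qfgcpe_transform_ordering (QX QY qX qY Ψ Ψ' : ℝ → ℝ) (η : ℝ) (hη : 0 < η)
    (hQX : ∀ v ∈ Set.Ioo (0 : ℝ) 1, HasDerivAt QX (qX v) v)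
    (hQY : ∀ v ∈ Set.Ioo (0 : ℝ) 1, HasDerivAt QY (qY v) v)
    (hqX_nonneg : ∀ v ∈ Set.Ioo (0 : ℝ) 1, 0 ≤ qX v)
    (hqY_nonneg : ∀ v ∈ Set.Ioo (0 : ℝ) 1, 0 ≤ qY v)
    (hΨ_incr : StrictMono Ψ)
    (hΨ_diff : ∀ x, HasDerivAt Ψ (Ψ' x) x)
    (hdisp : ∀ v ∈ Set.Ioo (0 : ℝ) 1, QX v ≤ QY v)
    (hintX : IntervalIntegrable (fun p => p * (-Real.log p) ^ η * (qX p * Ψ' (QX p)))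
      volume 0 1)
    (hintY : IntervalIntegrable (fun p => p * (-Real.log p) ^ η * (qY p * Ψ' (QY p)))
      volume 0 1) :
    ((∀ v ∈ Set.Ioo (0 : ℝ) 1, qY v ≤ qX v) → ConcaveOn ℝ Set.univ Ψ →
      (∫ p in (0 : ℝ)..1, p * (-Real.log p) ^ η * (qX p * Ψ' (QX p)))
        ≥ ∫ p in (0 : ℝ)..1, p * (-Real.log p) ^ η * (qY p * Ψ' (QY p))) ∧
    ((∀ v ∈ Set.Ioo (0 : ℝ) 1, qX v ≤ qY v) → ConvexOn ℝ Set.univ Ψ →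
      (∫ p in (0 : ℝ)..1, p * (-Real.log p) ^ η * (qX p * Ψ' (QX p)))
        ≤ ∫ p in (0 : ℝ)..1, p * (-Real.log p) ^ η * (qY p * Ψ' (QY p))) := by
  have hΨ'_nonneg : ∀ x, 0 ≤ Ψ' x := deriv_nonneg_of_strictMono hΨ_incr hΨ_diff
  have hbd : ∀ p ∈ Set.Icc (0:ℝ) 1, p ∉ Set.Ioo (0:ℝ) 1 →
      p * (-Real.log p) ^ η = 0 := by
    intro p hp hp'
    rcases eq_or_lt_of_le hp.1 with rfl | h0
    · ring
    rcases eq_or_lt_of_le hp.2 with rfl | h1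
    · simp [Real.zero_rpow (ne_of_gt hη)]
    · exact absurd ⟨h0, h1⟩ hp'
  constructor
  · intro hq hconc
    refine intervalIntegral.integral_mono_on zero_le_one hintY hintX ?_
    intro p hp
    by_cases hmem : p ∈ Set.Ioo (0:ℝ) 1
    · have hfac : 0 ≤ p * (-Real.log p) ^ η := by
        apply mul_nonneg (le_of_lt hmem.1)
        exact Real.rpow_nonneg (by simpa using Real.log_nonpos (le_of_lt hmem.1) (le_of_lt hmem.2)) η
      apply mul_le_mul_of_nonneg_left _ hfac
      exact mul_le_mul (hq p hmem) (concave_deriv_anti hconc hΨ_diff (hdisp p hmem))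
        (hΨ'_nonneg _) (le_trans (hqY_nonneg p hmem) (hq p hmem))
    · rw [hbd p hp hmem]; simp
  · intro hq hconv
    refine intervalIntegral.integral_mono_on zero_le_one hintX hintY ?_
    intro p hp
    by_cases hmem : p ∈ Set.Ioo (0:ℝ) 1
    · have hfac : 0 ≤ p * (-Real.log p) ^ η := by
        apply mul_nonneg (le_of_lt hmem.1)
        exact Real.rpow_nonneg (by simpa using Real.log_nonpos (le_of_lt hmem.1) (le_of_lt hmem.2)) η
      apply mul_le_mul_of_nonneg_left _ hfac
      exact mul_le_mul (hq p hmem) (convex_deriv_mono hconv hΨ_diff (hdisp p hmem))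
        (hΨ'_nonneg _) (le_trans (hqX_nonneg p hmem) (hq p hmem))
    · rw [hbd p hp hmem]; simp
end

section
/- For a, b > 0, η > 0 and v ∈ (0,1), the dynamic quantile-based fractional generalized cumulative past entropy of the power distribution with quantile density q(p) = (a/b) p^{1/b − 1} equals a v^{1/b} b^η / (b+1)^{η+1}; that is, (1/(v Γ(η+1))) ∫₀^v p (ln v − ln p)^η (a/b) p^{1/b − 1} dp = a v^{1/b} b^η / (b+1)^{η+1}. In particular, the DQFGCPE of the power distribution is increasing in v for all b > 0 and η > 0. -/
open MeasureTheory Real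

lemma dqfgcpe_key (a b η v : ℝ) (ha : 0 < a) (hb : 0 < b) (hη : 0 < η)
    (hv : 0 < v) (hv1 : v < 1) :
    (∫ p in (0 : ℝ)..v, p * (Real.log v - Real.log p) ^ η * ((a / b) * p ^ (1 / b - 1)))
      = (a / b) * v ^ (1 / b + 1) * ((1 / ((b + 1) / b)) ^ (η + 1) * Real.Gamma (η + 1)) := by
  have hbb : (0:ℝ) < (b+1)/b := by positivity
  rw [intervalIntegral.integral_of_le hv.le, MeasureTheory.integral_Ioc_eq_integral_Ioo]
  have himg : (fun t => v * Real.exp (-t)) '' Set.Ioi (0:ℝ) = Set.Ioo 0 v := by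
    ext x
    simp only [Set.mem_image, Set.mem_Ioi, Set.mem_Ioo]
    constructor
    · rintro ⟨t, ht, rfl⟩
      refine ⟨by positivity, ?_⟩
      have h1 : Real.exp (-t) < 1 := Real.exp_lt_one_iff.2 (by linarith)
      calc v * Real.exp (-t) < v * 1 := by nlinarith
        _ = v := mul_one v
    · rintro ⟨hx0, hxv⟩
      refine ⟨Real.log v - Real.log x, by simpa using Real.log_lt_log hx0 hxv, ?_⟩
      rw [neg_sub, Real.exp_sub, Real.exp_log hx0, Real.exp_log hv]
      field_simp
  have hderiv : ∀ t ∈ Set.Ioi (0:ℝ), HasDerivWithinAt (fun t => v * Real.exp (-t))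
      (v * (Real.exp (-t) * (-1))) (Set.Ioi 0) t := by
    intro t _
    exact (((hasDerivAt_neg t).exp).const_mul v).hasDerivWithinAt
  have hinj : Set.InjOn (fun t => v * Real.exp (-t)) (Set.Ioi 0) := by
    have : StrictAnti (fun t => v * Real.exp (-t)) := fun x y hxy => by
      have := Real.exp_lt_exp.2 (neg_lt_neg hxy)
      exact mul_lt_mul_of_pos_left this hv
    exact this.injective.injOn
  rw [← himg, integral_image_eq_integral_abs_deriv_smul measurableSet_Ioi hderiv hinj]
  have hcongr : ∀ t ∈ Set.Ioi (0:ℝ),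
      |v * (Real.exp (-t) * (-1))| • ((fun p => p * (Real.log v - Real.log p) ^ η *
          ((a / b) * p ^ (1 / b - 1))) (v * Real.exp (-t)))
        = ((a / b) * v ^ (1 / b + 1)) * (t ^ ((η + 1) - 1) * Real.exp (-(((b+1)/b) * t))) := by
    intro t ht
    have hE : (0:ℝ) < Real.exp (-t) := Real.exp_pos _
    have habs : |v * (Real.exp (-t) * (-1))| = v * Real.exp (-t) := by
      rw [abs_of_nonpos (by nlinarith)]; ring
    have hlog : Real.log v - Real.log (v * Real.exp (-t)) = t := by
      rw [Real.log_mul (ne_of_gt hv) (ne_of_gt hE), Real.log_exp]; ring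
    have hpow : (v * Real.exp (-t)) ^ (1 / b - 1)
        = v ^ (1 / b - 1) * Real.exp (-t * (1 / b - 1)) := by
      rw [Real.mul_rpow hv.le hE.le, Real.exp_mul]
    have h2 : v * v * v ^ (1 / b - 1) = v ^ (1 / b + 1) := by
      rw [show (1/b+1:ℝ) = 1 + (1 + (1/b-1)) by ring, Real.rpow_add hv, Real.rpow_add hv,
        Real.rpow_one]
      ring
    have h3 : Real.exp (-t) * Real.exp (-t) * Real.exp (-t * (1 / b - 1))
        = Real.exp (-(((b+1)/b) * t)) := by
      rw [← Real.exp_add, ← Real.exp_add]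
      congr 1
      field_simp
      ring
    simp only [smul_eq_mul, habs, hlog, hpow, add_sub_cancel_right]
    rw [← h2, ← h3]
    ring
  rw [MeasureTheory.setIntegral_congr_fun measurableSet_Ioi hcongr,
    MeasureTheory.integral_const_mul,
    Real.integral_rpow_mul_exp_neg_mul_Ioi (by linarith : (0:ℝ) < η + 1) hbb]

/-- The dynamic QFGCPE of the power distribution with quantile density
`q(p) = (a/b) p^(1/b - 1)` equals `a v^(1/b) b^η / (b+1)^(η+1)` for `v ∈ (0,1)`;
in particular it is increasing in `v`. -/
theorem dqfgcpe_power (a b η : ℝ) (ha : 0 < a) (hb : 0 < b) (hη : 0 < η) :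
    (∀ v ∈ Set.Ioo (0 : ℝ) 1,
      (1 / (v * Real.Gamma (η + 1))) *
          (∫ p in (0 : ℝ)..v, p * (Real.log v - Real.log p) ^ η * ((a / b) * p ^ (1 / b - 1)))
        = a * v ^ (1 / b) * b ^ η / (b + 1) ^ (η + 1)) ∧
    MonotoneOn (fun v =>
      (1 / (v * Real.Gamma (η + 1))) *
        ∫ p in (0 : ℝ)..v, p * (Real.log v - Real.log p) ^ η * ((a / b) * p ^ (1 / b - 1)))
      (Set.Ioo (0 : ℝ) 1) := by
  have hΓ : 0 < Real.Gamma (η + 1) := Real.Gamma_pos_of_pos (by linarith)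
  have hkey : ∀ v ∈ Set.Ioo (0 : ℝ) 1,
      (1 / (v * Real.Gamma (η + 1))) *
          (∫ p in (0 : ℝ)..v, p * (Real.log v - Real.log p) ^ η * ((a / b) * p ^ (1 / b - 1)))
        = a * v ^ (1 / b) * b ^ η / (b + 1) ^ (η + 1) := by
    rintro v ⟨hv, hv1⟩
    rw [dqfgcpe_key a b η v ha hb hη hv hv1]
    have h1 : v ^ (1 / b + 1) = v ^ (1 / b) * v := by
      rw [Real.rpow_add hv, Real.rpow_one]
    have h2 : (1 / ((b + 1) / b) : ℝ) = b / (b + 1) := one_div_div (b+1) b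
    have h3 : ((b / (b + 1) : ℝ)) ^ (η + 1) = b ^ (η + 1) / (b + 1) ^ (η + 1) :=
      Real.div_rpow hb.le (by linarith) _
    have h4 : b ^ (η + 1) = b ^ η * b := by rw [Real.rpow_add hb, Real.rpow_one]
    have h5 : (0:ℝ) < (b + 1) ^ (η + 1) := Real.rpow_pos_of_pos (by linarith) _
    rw [h1, h2, h3, h4]
    field_simp
  refine ⟨hkey, ?_⟩
  have hM : MonotoneOn (fun v : ℝ => a * v ^ (1 / b) * b ^ η / (b + 1) ^ (η + 1))
      (Set.Ioo (0 : ℝ) 1) := by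
    intro x hx y hy hxy
    have hr : x ^ (1 / b) ≤ y ^ (1 / b) := Real.rpow_le_rpow hx.1.le hxy (by positivity)
    have h5 : (0:ℝ) < (b + 1) ^ (η + 1) := Real.rpow_pos_of_pos (by linarith) _
    have h6 : (0:ℝ) < b ^ η := Real.rpow_pos_of_pos hb _
    have hx0 : (0:ℝ) ≤ x ^ (1 / b) := Real.rpow_nonneg hx.1.le _
    have h7 := mul_le_mul_of_nonneg_right (mul_le_mul_of_nonneg_left hr ha.le) h6.le
    exact div_le_div_of_nonneg_right h7 h5.le |>.trans_eq rfl
  exact hM.congr (fun v hv => (hkey v hv).symm)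
end
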